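/- arXiv:1601.03477 — 3 statements merged into one kernel-verified Lean document; each statement's English description precedes it below -/
import Mathlib

section
/- Let R, S, T be E0-large trees with S ⊆ R→0, T ⊆ R→1, and suppose σ ∈ 2^{<ω} satisfies T = σ·S and |σ| ≤ |stem(S)| = |stem(T)|. Then U = S ∪ T is an E0-large tree, stem(U) = stem(R), and S = U→0, T = U→1. -/
namespace E0L

/-- Finite binary strings `2^{<ω}`. -/
abbrev Str : Type := List Bool

/-- Sets of binary strings (in particular, trees). -/
abbrev Tr : Type := Set Str

/-- The action `s·t` of a string on a string:
`(s·t)(k) = t(k) + s(k) mod 2` for `k < min(|s|,|t|)` and `(s·t)(k) = t(k)` otherwise. -/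
def act (s t : Str) : Str := List.ofFn fun k : Fin t.length => Bool.xor (s.getD k false) (t.get k)

/-- The action `s·T` of a string on a set of strings. -/
def actT (s : Str) (T : Tr) : Tr := (act s) '' T

/-- `T ↾ s = {t ∈ T : s ⊆ t or t ⊆ s}`. -/
def restr (T : Tr) (s : Str) : Tr := {t ∈ T | s <+: t ∨ t <+: s}

/-- `[T]`, the set of infinite branches of `T` (as elements of Cantor space `2^ω`). -/
def branches (T : Tr) : Set (ℕ → Bool) := {x | ∀ n : ℕ, (List.ofFn fun k : Fin n => x k) ∈ T}

/-- `T[s] = {t : s ⊆ t or t ⊂ s}`. -/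
def Tbr (s : Str) : Tr := {t | s <+: t ∨ (t <+: s ∧ t ≠ s)}

/-- `LTwit T r q` : the strings `q i n` witness that `T` is an E0-large tree with stem `r`:
`|q^0_n| = |q^1_n| ≥ 1`, `q^i_n(0) = i`, and `T` consists of all initial segments of strings
of the form `r⌢q^{i(0)}_0⌢…⌢q^{i(n)}_n`. -/
def LTwit (T : Tr) (r : Str) (q : ℕ → Bool → Str) : Prop :=
  (∀ n : ℕ, (q n true).length = (q n false).length ∧ 1 ≤ (q n false).length) ∧
  (∀ n : ℕ, ∀ i : Bool, (q n i).head? = some i) ∧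
  T = {t | ∃ n : ℕ, ∃ f : ℕ → Bool,
        t <+: r ++ ((List.range (n+1)).map (fun k => q k (f k))).flatten}

/-- `T` is an E0-large tree (`T ∈ LT`). -/
def IsLT (T : Tr) : Prop := ∃ r q, LTwit T r q

/-- `stem T` : the longest `s ∈ T` with `T = T↾s`. -/
noncomputable def stem (T : Tr) : Str :=
  Classical.epsilon fun s => s ∈ T ∧ restr T s = T ∧ ∀ t ∈ T, restr T t = T → t.length ≤ s.length

/-- The canonical witness `(r, q)` of an E0-large tree. -/
noncomputable def witness (T : Tr) : Str × (ℕ → Bool → Str) :=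
  Classical.epsilon fun rq => LTwit T rq.1 rq.2

/-- Splitting levels computed from a witness: `spl_0 = |r|`, `spl_{n+1} = spl_n + |q^i_n|`. -/
def splN (r : Str) (q : ℕ → Bool → Str) : ℕ → ℕ
  | 0 => r.length
  | n+1 => splN r q n + (q n false).length

/-- `spl T n`, the `n`-th splitting level of an E0-large tree `T`. -/
noncomputable def spl (T : Tr) (n : ℕ) : ℕ := splN (witness T).1 (witness T).2 n

/-- Simple splitting `T→i = T↾(stem(T)⌢i)`. -/
noncomputable def split1 (T : Tr) (i : Bool) : Tr := restr T (stem T ++ [i])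

/-- Iterated splitting `T→s`: `T→Λ = T`, `T→(s⌢i) = (T→s)→i`. -/
noncomputable def splitS (T : Tr) (s : Str) : Tr := s.foldl split1 T

/-- `S ⊆_n T` : `S ⊆ T` and `spl_k(S) = spl_k(T)` for all `k < n`. -/
def subN (n : ℕ) (S T : Tr) : Prop := S ⊆ T ∧ ∀ k < n, spl S k = spl T k

/-- A large-tree forcing notion: a set of E0-large trees closed under restriction
and under the action of strings. -/
def IsLTF (P : Set Tr) : Prop :=
  (∀ T ∈ P, IsLT T) ∧
  (∀ T ∈ P, ∀ u ∈ T, restr T u ∈ P) ∧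
  (∀ T ∈ P, ∀ s : Str, actT s T ∈ P)

/-- `T` is an `n`-collage over `P`: `T ∈ LT` and `T→s ∈ P` for all `s ∈ 2^n`. -/
def IsCollage (P : Set Tr) (n : ℕ) (T : Tr) : Prop :=
  IsLT T ∧ ∀ s : Str, s.length = n → splitS T s ∈ P

/-- `D` is open dense in `P` (as a set of trees). -/
def OpenDense1 (P D : Set Tr) : Prop :=
  D ⊆ P ∧ (∀ S ∈ P, ∃ T ∈ D, T ⊆ S) ∧ (∀ S ∈ P, ∀ T ∈ D, S ⊆ T → S ∈ D)

/-- `⟨T,T'⟩` is a condition of the conditional product `P ×_{E0} P`. -/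
def CondPair (P : Set Tr) (p : Tr × Tr) : Prop :=
  p.1 ∈ P ∧ p.2 ∈ P ∧ ∃ s : Str, actT s p.1 = p.2

/-- Componentwise order on pairs of trees: `p ≤ q`. -/
def pleq (p q : Tr × Tr) : Prop := p.1 ⊆ q.1 ∧ p.2 ⊆ q.2

/-- Compatibility of two conditions in `P ×_{E0} P`. -/
def Compat (P : Set Tr) (p q : Tr × Tr) : Prop :=
  ∃ r : Tr × Tr, CondPair P r ∧ pleq r p ∧ pleq r q

/-- `D` is pre-dense in `P ×_{E0} P`. -/
def PreDense2 (P : Set Tr) (D : Set (Tr × Tr)) : Prop :=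
  ∀ p : Tr × Tr, CondPair P p → ∃ q ∈ D, Compat P p q

/-- `D` is open dense in `P ×_{E0} P`. -/
def OpenDense2 (P : Set Tr) (D : Set (Tr × Tr)) : Prop :=
  D ⊆ {p | CondPair P p} ∧
  (∀ p : Tr × Tr, CondPair P p → ∃ q ∈ D, pleq q p) ∧
  (∀ p : Tr × Tr, CondPair P p → ∀ q ∈ D, pleq p q → p ∈ D)

/-- A `P ×_{E0} P`-real name `c = ⟨C_n^i⟩`. -/
def IsRealName (P : Set Tr) (c : ℕ → Bool → Set (Tr × Tr)) : Prop :=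
  (∀ n : ℕ, ∀ i : Bool, c n i ⊆ {p | CondPair P p}) ∧
  (∀ n : ℕ, PreDense2 P (c n false ∪ c n true)) ∧
  (∀ n : ℕ, ∀ p ∈ c n false, ∀ q ∈ c n true, ¬ Compat P p q)

/-- `p` directly forces `c(n) = i`. -/
def DFVal (c : ℕ → Bool → Set (Tr × Tr)) (p : Tr × Tr) (n : ℕ) (i : Bool) : Prop :=
  ∃ q ∈ c n i, pleq p q

/-- `p` directly forces `s ⊂ c`. -/
def DFPrefix (c : ℕ → Bool → Set (Tr × Tr)) (p : Tr × Tr) (s : Str) : Prop :=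
  ∀ n < s.length, DFVal c p n (s.getD n false)

/-- `p` directly forces `c ∉ [U]`. -/
def DFAvoid (c : ℕ → Bool → Set (Tr × Tr)) (p : Tr × Tr) (U : Tr) : Prop :=
  ∃ s : Str, s ∉ U ∧ DFPrefix c p s

/-- `p` directly forces `c ≠ d`: there are incomparable strings `s, t` such that
`p` directly forces `s ⊂ c` and `t ⊂ d`. -/
def DFNe (c d : ℕ → Bool → Set (Tr × Tr)) (p : Tr × Tr) : Prop :=
  ∃ s t : Str, ¬ s <+: t ∧ ¬ t <+: s ∧ DFPrefix c p s ∧ DFPrefix d p t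

/-- The action `σ·c` of a string on a real name. -/
def actName (σ : Str) (c : ℕ → Bool → Set (Tr × Tr)) : ℕ → Bool → Set (Tr × Tr) :=
  fun n i => if σ.getD n false = true then c n (!i) else c n i

/-- The name `π_left` of the left generic real. -/
def piLeft : ℕ → Bool → Set (Tr × Tr) := fun n i =>
  {p | ∃ s t : Str, s.length = n+1 ∧ t.length = n+1 ∧ s.getD n false = i ∧ p = (Tbr s, Tbr t)}

/-- The name `π_right` of the right generic real. -/
def piRight : ℕ → Bool → Set (Tr × Tr) := fun n i =>
  {p | ∃ s t : Str, s.length = n+1 ∧ t.length = n+1 ∧ t.getD n false = i ∧ p = (Tbr s, Tbr t)}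


section Helpers

@[simp] lemma act_length (σ t : Str) : (act σ t).length = t.length := by simp [act]

lemma act_getElem (σ t : Str) (k : ℕ) (h : k < t.length) :
    (act σ t)[k]'(by simpa using h) = Bool.xor (σ.getD k false) t[k] := by
  simp [act]

lemma act_act (σ t : Str) : act σ (act σ t) = t := by
  apply List.ext_getElem (by simp)
  intro k h1 h2
  rw [act_getElem σ _ k (by simpa using h2), act_getElem σ t k h2]
  cases σ.getD k false <;> simp

lemma act_prefix (σ : Str) {s t : Str} (h : s <+: t) : act σ s <+: act σ t := by
  rw [List.prefix_iff_eq_take]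
  apply List.ext_getElem (by simp [h.length_le])
  intro k h1 h2
  have hk : k < s.length := by simpa using h1
  rw [List.getElem_take]
  rw [act_getElem σ s k hk, act_getElem σ t k (hk.trans_le h.length_le), h.getElem hk]

lemma act_append (σ u v : Str) (h : σ.length ≤ u.length) : act σ (u ++ v) = act σ u ++ v := by
  apply List.ext_getElem (by simp)
  intro k h1 h2
  rw [act_getElem σ _ k (by simpa using h1)]
  rcases lt_or_ge k u.length with hk | hk
  · rw [List.getElem_append_left (show k < (act σ u).length by simpa using hk),
      act_getElem σ u k hk, List.getElem_append_left hk]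
  · rw [List.getElem_append_right (show (act σ u).length ≤ k by simpa using hk),
      List.getD_eq_default _ _ (h.trans hk), List.getElem_append_right hk]
    simp


def Fstr (r : Str) (q : ℕ → Bool → Str) (n : ℕ) (f : ℕ → Bool) : Str :=
  r ++ ((List.range (n+1)).map (fun k => q k (f k))).flatten

lemma mem_of_LTwit {T r q} (h : LTwit T r q) {t : Str} :
    t ∈ T ↔ ∃ n f, t <+: Fstr r q n f := by
  conv_lhs => rw [h.2.2]
  rfl

lemma Fstr_zero (r q f) : Fstr r q 0 f = r ++ q 0 (f 0) := by
  simp [Fstr, List.range_succ]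

lemma Fstr_succ (r q n f) : Fstr r q (n+1) f = Fstr r q n f ++ q (n+1) (f (n+1)) := by
  simp [Fstr, List.range_succ]

lemma prefix_Fstr (r q n f) : r <+: Fstr r q n f := List.prefix_append _ _

lemma qlen {T r q} (h : LTwit T r q) (n : ℕ) (i : Bool) : 1 ≤ (q n i).length := by
  cases i
  · exact (h.1 n).2
  · rw [(h.1 n).1]; exact (h.1 n).2

lemma Fstr_length {T r q} (h : LTwit T r q) (n f) :
    r.length + (n+1) ≤ (Fstr r q n f).length := by
  induction n with
  | zero => rw [Fstr_zero]; simp [Nat.add_le_add_iff_left]; exact qlen h 0 (f 0)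
  | succ n ih =>
      rw [Fstr_succ]
      simp only [List.length_append]
      have := qlen h (n+1) (f (n+1))
      omega

lemma Fstr_getElem_stem {T r q} (h : LTwit T r q) (n f)
    (hl : r.length < (Fstr r q n f).length) :
    (Fstr r q n f)[r.length] = f 0 := by
  induction n with
  | zero =>
      rw [Fstr_zero] at hl
      rw [List.getElem_of_eq (Fstr_zero r q f) _,
        List.getElem_append_right (le_refl _)]
      simp only [Nat.sub_self]
      have h1 := qlen h 0 (f 0)
      have h2 := h.2.1 0 (f 0)
      have h0 : q 0 (f 0) ≠ [] := by intro e; rw [e] at h1; simp at h1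
      obtain ⟨a, l, hq⟩ := List.exists_cons_of_ne_nil h0
      rw [hq] at h2
      simp at h2
      rw [List.getElem_of_eq hq]
      simpa using h2
  | succ n ih =>
      have hl' : r.length < (Fstr r q n f).length := by
        have := Fstr_length h n f; omega
      rw [List.getElem_of_eq (Fstr_succ r q n f) _, List.getElem_append_left hl']
      exact ih hl'

lemma comparable_of_prefix {s t w : Str} (hs : s <+: w) (ht : t <+: w) :
    s <+: t ∨ t <+: s := List.prefix_or_prefix_of_prefix hs ht

/-- The stem of an E0-large tree with witness `(r,q)` is `r`. -/
lemma LTwit.stem_eq {T r q} (h : LTwit T r q) : stem T = r := by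
  have hrT : r ∈ T := (mem_of_LTwit h).2 ⟨0, fun _ => false, prefix_Fstr _ _ _ _⟩
  have hrestr : ∀ s, s ∈ T → restr T s = T → ∀ t ∈ T, (s <+: t ∨ t <+: s) := by
    intro s hs hr t ht
    rw [← hr] at ht
    exact ht.2
  have hPr : r ∈ T ∧ restr T r = T ∧ ∀ t ∈ T, restr T t = T → t.length ≤ r.length := by
    refine ⟨hrT, ?_, ?_⟩
    · apply Set.Subset.antisymm (fun t ht => ht.1)
      intro t ht
      refine ⟨ht, ?_⟩
      obtain ⟨n, f, hpre⟩ := (mem_of_LTwit h).1 ht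
      exact (comparable_of_prefix (prefix_Fstr r q n f) hpre).symm.imp id id |>.symm.imp id id
    · intro t ht hrt
      by_contra hlen
      push_neg at hlen
      obtain ⟨n, f, hpre⟩ := (mem_of_LTwit h).1 ht
      -- t[r.length] = f 0
      have hrl : r.length < t.length := hlen
      have htg : t[r.length]'hrl = f 0 := by
        rw [hpre.getElem hrl]
        exact Fstr_getElem_stem h n f (hrl.trans_le hpre.length_le)
      -- the opposite branch
      set g : ℕ → Bool := fun _ => !(f 0) with hg
      have hw : Fstr r q 0 g ∈ T := (mem_of_LTwit h).2 ⟨0, g, List.prefix_refl _⟩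
      have hwl : r.length < (Fstr r q 0 g).length := by have := Fstr_length h 0 g; omega
      have hwg : (Fstr r q 0 g)[r.length]'hwl = !(f 0) := Fstr_getElem_stem h 0 g hwl
      have hcomp := hrestr t ht hrt _ hw
      rcases hcomp with hc | hc
      · rw [hc.getElem hrl] at htg; rw [htg] at hwg; simp at hwg
      · rw [hc.getElem hwl] at hwg; rw [hwg] at htg; simp at htg
  have hstem := Classical.epsilon_spec (p := fun s => s ∈ T ∧ restr T s = T ∧
      ∀ t ∈ T, restr T t = T → t.length ≤ s.length) ⟨r, hPr⟩
  set s := stem T with hs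
  have hsT : s ∈ T := hstem.1
  have hlen1 : s.length ≤ r.length := hPr.2.2 s hsT hstem.2.1
  have hlen2 : r.length ≤ s.length := hstem.2.2 r hrT hPr.2.1
  have hcomp := hrestr r hrT hPr.2.1 s hsT
  rcases hcomp with hc | hc
  · exact (List.IsPrefix.eq_of_length hc (by omega)).symm
  · exact List.IsPrefix.eq_of_length hc (by omega)

lemma head?_eq_getElem {l : Str} (h : 0 < l.length) : l.head? = some (l[0]'h) := by
  obtain ⟨a, t, rfl⟩ := List.exists_cons_of_ne_nil (List.length_pos_iff.mp h)
  simp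

lemma comp_stem {S : Tr} {rS : Str} {q} (h : LTwit S rS q) {p : Str}
    (hc : ∀ s ∈ S, p <+: s ∨ s <+: p) : p <+: rS := by
  have hw : ∀ i : Bool, Fstr rS q p.length (fun _ => i) ∈ S :=
    fun i => (mem_of_LTwit h).2 ⟨p.length, fun _ => i, List.prefix_refl _⟩
  have hwl : ∀ i : Bool, p.length < (Fstr rS q p.length (fun _ => i)).length := by
    intro i; have := Fstr_length h p.length (fun _ => i); omega
  have hpw : ∀ i : Bool, p <+: Fstr rS q p.length (fun _ => i) := by
    intro i
    rcases hc _ (hw i) with hc' | hc'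
    · exact hc'
    · exact absurd hc'.length_le (by have := hwl i; omega)
  have hrl : ∀ i : Bool, rS.length < (Fstr rS q p.length (fun _ => i)).length := by
    intro i; have := Fstr_length h p.length (fun _ => i); omega
  have hplen : p.length ≤ rS.length := by
    by_contra hlt
    push_neg at hlt
    have h1 : p[rS.length]'hlt = false := by
      rw [(hpw false).getElem hlt]
      exact Fstr_getElem_stem h _ _ (hrl false)
    have h2 : p[rS.length]'hlt = true := by
      rw [(hpw true).getElem hlt]
      exact Fstr_getElem_stem h _ _ (hrl true)
    rw [h1] at h2; simp at h2
  exact List.prefix_of_prefix_length_le (hpw false)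
    (List.prefix_append _ _ : rS <+: Fstr rS q p.length (fun _ => false)) hplen

lemma Fstr_act (σ rS : Str) (q) (n f) (hσ : σ.length ≤ rS.length) :
    Fstr (act σ rS) q n f = act σ (Fstr rS q n f) := by
  unfold Fstr
  rw [act_append _ _ _ hσ]

lemma ltwit_act {S : Tr} {rS : Str} {q} (h : LTwit S rS q) {σ : Str}
    (hσ : σ.length ≤ rS.length) : LTwit (actT σ S) (act σ rS) q := by
  refine ⟨h.1, h.2.1, ?_⟩
  ext t
  show t ∈ actT σ S ↔ ∃ n f, t <+: Fstr (act σ rS) q n f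
  constructor
  · rintro ⟨s, hs, rfl⟩
    obtain ⟨n, f, hp⟩ := (mem_of_LTwit h).1 hs
    exact ⟨n, f, by rw [Fstr_act _ _ _ _ _ hσ]; exact act_prefix σ hp⟩
  · rintro ⟨n, f, hp⟩
    rw [Fstr_act _ _ _ _ _ hσ] at hp
    have : act σ t ∈ S := by
      apply (mem_of_LTwit h).2
      refine ⟨n, f, ?_⟩
      have := act_prefix σ hp
      rwa [act_act] at this
    exact ⟨act σ t, this, act_act σ t⟩

lemma Fstr_shift (r : Str) (q : ℕ → Bool → Str) (n : ℕ) (f : ℕ → Bool) :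
    Fstr r q (n+1) f = Fstr (r ++ q 0 (f 0)) (fun k i => q (k+1) i) n (fun k => f (k+1)) := by
  induction n with
  | zero => rw [Fstr_succ, Fstr_zero, Fstr_zero, List.append_assoc]
  | succ n ih => rw [Fstr_succ, ih, Fstr_succ]

end Helpers

/-- Lemma `uv`: if `R, S, T` are E0-large trees, `S ⊆ R→0`, `T ⊆ R→1`,
`T = σ·S`, and `|σ| ≤ |stem S| = |stem T|`, then `U = S ∪ T` is an E0-large tree with
`stem U = stem R`, `U→0 = S` and `U→1 = T`. -/
theorem stmt2 (R S T : Tr) (hR : IsLT R) (hS : IsLT S) (hT : IsLT T)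
    (hS0 : S ⊆ split1 R false) (hT1 : T ⊆ split1 R true)
    (σ : Str) (hσ : T = actT σ S)
    (hlen : σ.length ≤ (stem S).length) (hstems : (stem S).length = (stem T).length) :
    IsLT (S ∪ T) ∧ stem (S ∪ T) = stem R ∧
      split1 (S ∪ T) false = S ∧ split1 (S ∪ T) true = T := by
  obtain ⟨rS, qS, hwS⟩ := hS
  have hstemS : stem S = rS := hwS.stem_eq
  rw [hstemS] at hlen
  have hwT : LTwit T (act σ rS) qS := hσ ▸ ltwit_act hwS hlen
  set rT := act σ rS with hrT
  set r := stem R with hr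
  have hp0 : (r ++ [false]) <+: rS := comp_stem hwS (fun s hs => (hS0 hs).2)
  have hp1 : (r ++ [true]) <+: rT := comp_stem hwT (fun s hs => (hT1 hs).2)
  have hlenST : rS.length = rT.length := (act_length σ rS).symm
  have hrlS : r.length + 1 ≤ rS.length := by simpa using hp0.length_le
  have hrlT : r.length + 1 ≤ rT.length := by simpa using hp1.length_le
  have hgS : rS[r.length]'(by omega) = false := by
    rw [← hp0.getElem (by simp), List.getElem_append_right (le_refl _)]
    simp
  have hgT : rT[r.length]'(by omega) = true := by
    rw [← hp1.getElem (by simp), List.getElem_append_right (le_refl _)]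
    simp
  have hprS : r <+: rS := (List.prefix_append r [false]).trans hp0
  have hprT : r <+: rT := (List.prefix_append r [true]).trans hp1
  have hd0 : r ++ rS.drop r.length = rS := by
    nth_rewrite 1 [List.prefix_iff_eq_take.mp hprS]
    exact List.take_append_drop _ _
  have hd1 : r ++ rT.drop r.length = rT := by
    nth_rewrite 1 [List.prefix_iff_eq_take.mp hprT]
    exact List.take_append_drop _ _
  set d0 := rS.drop r.length with hdd0
  set d1 := rT.drop r.length with hdd1
  have hld0 : d0.length = rS.length - r.length := by simp [hdd0]
  have hld1 : d1.length = rT.length - r.length := by simp [hdd1]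
  set qU : ℕ → Bool → Str := fun n i => if n = 0 then (if i then d1 else d0) else qS (n-1) i
    with hqU
  have hqUs : (fun (k : ℕ) (i : Bool) => qU (k+1) i) = qS := by funext k i; simp [hqU]
  have hside : ∀ i : Bool, r ++ qU 0 i = if i then rT else rS := by
    intro i; cases i <;> simp [hqU, hd0, hd1]
  have hFU : ∀ n f, Fstr r qU (n+1) f = Fstr (if f 0 then rT else rS) qS n (fun k => f (k+1)) := by
    intro n f
    rw [Fstr_shift, hside (f 0), hqUs]
  -- getElem at position r.length of elements of S and T
  have hSg : ∀ t ∈ S, ∀ (h : r.length < t.length), t[r.length]'h = false := by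
    intro t ht h
    obtain ⟨n, f, hp⟩ := (mem_of_LTwit hwS).1 ht
    rw [hp.getElem h, ← (prefix_Fstr rS qS n f).getElem (show r.length < rS.length by omega)]
    exact hgS
  have hTg : ∀ t ∈ T, ∀ (h : r.length < t.length), t[r.length]'h = true := by
    intro t ht h
    obtain ⟨n, f, hp⟩ := (mem_of_LTwit hwT).1 ht
    rw [hp.getElem h, ← (prefix_Fstr rT qS n f).getElem (show r.length < rT.length by omega)]
    exact hgT
  -- the witness for the union
  have hwU : LTwit (S ∪ T) r qU := by
    refine ⟨?_, ?_, ?_⟩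
    · intro n
      match n with
      | 0 =>
        refine ⟨?_, ?_⟩
        · simp only [hqU, if_pos rfl, if_neg Bool.false_ne_true]
          show d1.length = d0.length
          omega
        · simp only [hqU, if_pos rfl]
          show 1 ≤ d0.length
          omega
      | n+1 => simpa [hqU] using hwS.1 n
    · intro n i
      match n with
      | 0 =>
        cases i
        · show (qU 0 false).head? = some false
          have : qU 0 false = d0 := by simp [hqU]
          rw [this, head?_eq_getElem (by omega : 0 < d0.length)]
          congr 1
          show d0[0]'_ = false
          rw [List.getElem_of_eq hdd0 _, List.getElem_drop]
          simpa using hgS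
        · show (qU 0 true).head? = some true
          have : qU 0 true = d1 := by simp [hqU]
          rw [this, head?_eq_getElem (by omega : 0 < d1.length)]
          congr 1
          show d1[0]'_ = true
          rw [List.getElem_of_eq hdd1 _, List.getElem_drop]
          simpa using hgT
      | n+1 => simpa [hqU] using hwS.2.1 n i
    · ext t
      show t ∈ S ∪ T ↔ ∃ n f, t <+: Fstr r qU n f
      constructor
      · rintro (ht | ht)
        · obtain ⟨m, g, hp⟩ := (mem_of_LTwit hwS).1 ht
          refine ⟨m+1, fun k => if k = 0 then false else g (k-1), ?_⟩
          rw [hFU]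
          simpa using hp
        · obtain ⟨m, g, hp⟩ := (mem_of_LTwit hwT).1 ht
          refine ⟨m+1, fun k => if k = 0 then true else g (k-1), ?_⟩
          rw [hFU]
          simpa using hp
      · rintro ⟨n, f, hp⟩
        match n with
        | 0 =>
          rw [Fstr_zero, hside] at hp
          cases hf : f 0 <;> rw [hf] at hp <;> simp only [if_pos rfl, Bool.false_eq_true,
            if_neg, ite_false, ite_true] at hp
          · exact Or.inl ((mem_of_LTwit hwS).2
              ⟨0, fun _ => false, hp.trans (prefix_Fstr rS qS 0 _)⟩)
          · exact Or.inr ((mem_of_LTwit hwT).2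
              ⟨0, fun _ => false, hp.trans (prefix_Fstr rT qS 0 _)⟩)
        | m+1 =>
          rw [hFU] at hp
          cases hf : f 0 <;> rw [hf] at hp <;>
            simp only [Bool.false_eq_true, ite_false, ite_true] at hp
          · exact Or.inl ((mem_of_LTwit hwS).2 ⟨m, fun k => f (k+1), hp⟩)
          · exact Or.inr ((mem_of_LTwit hwT).2 ⟨m, fun k => f (k+1), hp⟩)
  have hstemU : stem (S ∪ T) = r := hwU.stem_eq
  refine ⟨⟨r, qU, hwU⟩, hstemU, ?_, ?_⟩
  · show restr (S ∪ T) (stem (S ∪ T) ++ [false]) = S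
    rw [hstemU]
    ext t
    constructor
    · rintro ⟨(ht | ht), hcomp⟩
      · exact ht
      · -- t ∈ T comparable with r ++ [false] ⟹ t <+: r ⟹ t ∈ S
        have htp : t <+: r ++ [false] := by
          rcases hcomp with hc | hc
          · exfalso
            have hlt : r.length < t.length := by
              have := hc.length_le; simp at this; omega
            have h1 := hTg t ht hlt
            rw [← hc.getElem (by simp), List.getElem_append_right (le_refl _)] at h1
            simp at h1
          · exact hc
        have hlt2 : t.length ≤ r.length := by
          by_contra hlt
          push_neg at hlt
          have h1 := hTg t ht hlt
          have hteq : t = r ++ [false] := htp.eq_of_length (by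
            have := htp.length_le; simp at this ⊢; omega)
          rw [List.getElem_of_eq hteq _, List.getElem_append_right (le_refl _)] at h1
          simp at h1
        have htr : t <+: r :=
          List.prefix_of_prefix_length_le htp (List.prefix_append r [false]) hlt2
        exact (mem_of_LTwit hwS).2
          ⟨0, fun _ => false, htr.trans (hprS.trans (prefix_Fstr rS qS 0 _))⟩
    · intro ht
      exact ⟨Or.inl ht, (hS0 ht).2⟩
  · show restr (S ∪ T) (stem (S ∪ T) ++ [true]) = T
    rw [hstemU]
    ext t
    constructor
    · rintro ⟨(ht | ht), hcomp⟩
      · -- t ∈ S comparable with r ++ [true] ⟹ t <+: r ⟹ t ∈ T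
        have htp : t <+: r ++ [true] := by
          rcases hcomp with hc | hc
          · exfalso
            have hlt : r.length < t.length := by
              have := hc.length_le; simp at this; omega
            have h1 := hSg t ht hlt
            rw [← hc.getElem (by simp), List.getElem_append_right (le_refl _)] at h1
            simp at h1
          · exact hc
        have hlt2 : t.length ≤ r.length := by
          by_contra hlt
          push_neg at hlt
          have h1 := hSg t ht hlt
          have hteq : t = r ++ [true] := htp.eq_of_length (by
            have := htp.length_le; simp at this ⊢; omega)
          rw [List.getElem_of_eq hteq _, List.getElem_append_right (le_refl _)] at h1
          simp at h1
        have htr : t <+: r :=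
          List.prefix_of_prefix_length_le htp (List.prefix_append r [true]) hlt2
        exact (mem_of_LTwit hwT).2
          ⟨0, fun _ => false, htr.trans (hprT.trans (prefix_Fstr rT qS 0 _))⟩
      · exact ht
    · intro ht
      exact ⟨Or.inr ht, (hT1 ht).2⟩

end E0L
end

section
/- (Fusion, part 1.) Let ⟨T_n⟩_{n<ω} be a sequence of E0-large trees such that T_{n+1} ⊆_{n+1} T_n for every n < ω. Then T = ⋂_{n<ω} T_n is an E0-large tree, and spl_n(T) = spl_n(T_n) for all n. -/
namespace E0L

/-! ### Auxiliary machinery for fusion -/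

/-- The branch string of length `splN r q n` determined by `f`. -/
def bstrP (r : Str) (q : ℕ → Bool → Str) (n : ℕ) (f : ℕ → Bool) : Str :=
  r ++ ((List.range n).map (fun k => q k (f k))).flatten

lemma bstrP_zero (r : Str) (q : ℕ → Bool → Str) (f : ℕ → Bool) : bstrP r q 0 f = r := by
  simp [bstrP]

lemma bstrP_succ (r : Str) (q : ℕ → Bool → Str) (n : ℕ) (f : ℕ → Bool) :
    bstrP r q (n+1) f = bstrP r q n f ++ q n (f n) := by
  simp [bstrP, List.range_succ]

lemma length_q (q : ℕ → Bool → Str)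
    (hlen : ∀ n : ℕ, (q n true).length = (q n false).length ∧ 1 ≤ (q n false).length)
    (n : ℕ) (i : Bool) : (q n i).length = (q n false).length := by
  cases i
  · rfl
  · exact (hlen n).1

lemma length_bstrP (r : Str) (q : ℕ → Bool → Str)
    (hlen : ∀ n : ℕ, (q n true).length = (q n false).length ∧ 1 ≤ (q n false).length)
    (n : ℕ) (f : ℕ → Bool) : (bstrP r q n f).length = splN r q n := by
  induction n with
  | zero => simp [bstrP_zero, splN]
  | succ n ih =>
      rw [bstrP_succ, List.length_append, ih, length_q q hlen n (f n)]
      rfl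

lemma bstrP_mono (r : Str) (q : ℕ → Bool → Str) {n m : ℕ} (h : n ≤ m) (f : ℕ → Bool) :
    bstrP r q n f <+: bstrP r q m f := by
  induction m with
  | zero => simp_all
  | succ m ih =>
      rcases Nat.lt_or_ge n (m+1) with h' | h'
      · exact (ih (Nat.lt_succ_iff.mp h')).trans (by rw [bstrP_succ]; exact List.prefix_append _ _)
      · have : n = m + 1 := le_antisymm h h'
        subst this; exact List.prefix_refl _

lemma bstrP_congr (r : Str) (q : ℕ → Bool → Str) {n : ℕ} {f g : ℕ → Bool}
    (h : ∀ k, k < n → f k = g k) : bstrP r q n f = bstrP r q n g := by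
  unfold bstrP
  congr 1
  congr 1
  exact List.map_congr_left fun k hk => by rw [h k (List.mem_range.mp hk)]

lemma LTwit.mem_iff {T : Tr} {r : Str} {q : ℕ → Bool → Str} (h : LTwit T r q) (t : Str) :
    t ∈ T ↔ ∃ n f, t <+: bstrP r q (n+1) f := by
  rw [h.2.2]; rfl

lemma LTwit.mem_of_prefix {T : Tr} {r : Str} {q : ℕ → Bool → Str} (h : LTwit T r q)
    {t : Str} {n : ℕ} {f : ℕ → Bool} (hp : t <+: bstrP r q n f) : t ∈ T :=
  (h.mem_iff t).mpr ⟨n, f, hp.trans (bstrP_mono r q (Nat.le_succ n) f)⟩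

lemma splN_strictMono (r : Str) (q : ℕ → Bool → Str)
    (hlen : ∀ n : ℕ, (q n true).length = (q n false).length ∧ 1 ≤ (q n false).length) :
    StrictMono (splN r q) := by
  apply strictMono_nat_of_lt_succ
  intro n
  have := (hlen n).2
  show splN r q n < splN r q n + (q n false).length
  omega

/-- `T` splits at level `m`. -/
def Splits (T : Tr) (m : ℕ) : Prop :=
  ∃ t : Str, t ∈ T ∧ t.length = m ∧ t ++ [false] ∈ T ∧ t ++ [true] ∈ T

lemma exists_between {g : ℕ → ℕ} {m : ℕ} (h0 : g 0 ≤ m) (hub : ∃ j, m < g j) :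
    ∃ k, g k ≤ m ∧ m < g (k+1) := by
  classical
  have hjspec : m < g (Nat.find hub) := Nat.find_spec hub
  have hj0 : Nat.find hub ≠ 0 := by intro h; rw [h] at hjspec; omega
  obtain ⟨k, hk⟩ := Nat.exists_eq_succ_of_ne_zero hj0
  have hmin : ¬ m < g k := Nat.find_min hub (by omega)
  rw [hk] at hjspec
  exact ⟨k, by omega, hjspec⟩
lemma LTwit.splits_iff {T : Tr} {r : Str} {q : ℕ → Bool → Str} (h : LTwit T r q) (m : ℕ) :
    Splits T m ↔ ∃ n, splN r q n = m := by
  obtain ⟨hlen, hhead, hset⟩ := h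
  have hsm := splN_strictMono r q hlen
  constructor
  · rintro ⟨t, ht, htlen, h0, h1⟩
    by_contra hno
    push_neg at hno
    obtain ⟨n0, f0, hp0⟩ := (LTwit.mem_iff ⟨hlen, hhead, hset⟩ _).mp h0
    obtain ⟨n1, f1, hp1⟩ := (LTwit.mem_iff ⟨hlen, hhead, hset⟩ _).mp h1
    rcases Nat.lt_or_ge m (splN r q 0) with hc | hc
    · -- m < |r| : both t++[i] are prefixes of r, contradiction
      have key : ∀ (i : Bool) (n : ℕ) (f : ℕ → Bool), t ++ [i] <+: bstrP r q (n+1) f →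
          t ++ [i] <+: r := by
        intro i n f hp
        have hr : r <+: bstrP r q (n+1) f := by
          have := bstrP_mono r q (Nat.zero_le (n+1)) f
          rwa [bstrP_zero] at this
        refine List.prefix_of_prefix_length_le hp hr ?_
        have : (t ++ [i]).length = m + 1 := by simp [htlen]
        rw [this]
        exact hc
      have e0 := key false n0 f0 hp0
      have e1 := key true n1 f1 hp1
      have : t ++ [false] = t ++ [true] :=
        (List.prefix_of_prefix_length_le e0 e1 (by simp)).eq_of_length (by simp)
      simp at this
    · -- splN 0 ≤ m, find k with splN k ≤ m < splN (k+1)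
      obtain ⟨k, hk, hk1⟩ := exists_between hc ⟨m+1, lt_of_lt_of_le (Nat.lt_succ_self m)
        (hsm.le_apply)⟩
      have hkm : splN r q k < m := lt_of_le_of_ne hk (hno k)
      set N := max (max (n0+1) (n1+1)) (k+1) with hN
      have hpN0 : t ++ [false] <+: bstrP r q N f0 :=
        hp0.trans (bstrP_mono r q (le_trans (le_max_left _ _) (le_max_left _ _)) f0)
      have hpN1 : t ++ [true] <+: bstrP r q N f1 :=
        hp1.trans (bstrP_mono r q (le_trans (le_max_right _ _) (le_max_left _ _)) f1)
      have hkN : k + 1 ≤ N := le_max_right _ _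
      have htself : ∀ i : Bool, t <+: t ++ [i] := fun i => ⟨[i], rfl⟩
      -- v_i
      have hv0 : bstrP r q k f0 <+: t :=
        List.prefix_of_prefix_length_le (bstrP_mono r q (by omega) f0)
          ((htself false).trans hpN0)
          (by rw [length_bstrP r q hlen, htlen]; omega)
      have hv1 : bstrP r q k f1 <+: t :=
        List.prefix_of_prefix_length_le (bstrP_mono r q (by omega) f1)
          ((htself true).trans hpN1)
          (by rw [length_bstrP r q hlen, htlen]; omega)
      have hveq : bstrP r q k f0 = bstrP r q k f1 :=
        (List.prefix_of_prefix_length_le hv0 hv1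
          (by rw [length_bstrP r q hlen, length_bstrP r q hlen])).eq_of_length
          (by rw [length_bstrP r q hlen, length_bstrP r q hlen])
      -- t ++ [i] <+: w_i
      have htw0 : t ++ [false] <+: bstrP r q (k+1) f0 :=
        List.prefix_of_prefix_length_le hpN0 (bstrP_mono r q hkN f0)
          (by rw [length_bstrP r q hlen]; simp [htlen]; omega)
      have htw1 : t ++ [true] <+: bstrP r q (k+1) f1 :=
        List.prefix_of_prefix_length_le hpN1 (bstrP_mono r q hkN f1)
          (by rw [length_bstrP r q hlen]; simp [htlen]; omega)
      -- heads of segments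
      obtain ⟨tl0, htl0⟩ := List.head?_eq_some_iff.mp (hhead k (f0 k))
      obtain ⟨tl1, htl1⟩ := List.head?_eq_some_iff.mp (hhead k (f1 k))
      have hb0 : bstrP r q k f0 ++ [f0 k] <+: bstrP r q (k+1) f0 := by
        rw [bstrP_succ, htl0]; exact ⟨tl0, by simp⟩
      have hb1 : bstrP r q k f1 ++ [f1 k] <+: bstrP r q (k+1) f1 := by
        rw [bstrP_succ, htl1]; exact ⟨tl1, by simp⟩
      have hbt0 : bstrP r q k f0 ++ [f0 k] <+: t :=
        List.prefix_of_prefix_length_le hb0 ((htself false).trans htw0)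
          (by rw [List.length_append, length_bstrP r q hlen, htlen]; simp; omega)
      have hbt1 : bstrP r q k f1 ++ [f1 k] <+: t :=
        List.prefix_of_prefix_length_le hb1 ((htself true).trans htw1)
          (by rw [List.length_append, length_bstrP r q hlen, htlen]; simp; omega)
      have hfeq : f0 k = f1 k := by
        have : bstrP r q k f0 ++ [f0 k] = bstrP r q k f1 ++ [f1 k] :=
          (List.prefix_of_prefix_length_le hbt0 hbt1
            (by simp [length_bstrP r q hlen])).eq_of_length
            (by simp [length_bstrP r q hlen])
        rw [hveq] at this
        have := List.append_cancel_left this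
        simpa using this
      have hweq : bstrP r q (k+1) f0 = bstrP r q (k+1) f1 := by
        rw [bstrP_succ, bstrP_succ, hveq, hfeq]
      rw [hweq] at htw0
      have : t ++ [false] = t ++ [true] :=
        (List.prefix_of_prefix_length_le htw0 htw1 (by simp)).eq_of_length (by simp)
      simp at this
  · rintro ⟨n, rfl⟩
    have key : ∀ i : Bool, bstrP r q n (fun _ => false) ++ [i] ∈ T := by
      intro i
      refine LTwit.mem_of_prefix (n := n+1) (f := fun k => if k < n then false else i)
        ⟨hlen, hhead, hset⟩ ?_
      have hcongr : bstrP r q n (fun _ => false) =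
          bstrP r q n (fun k => if k < n then false else i) :=
        bstrP_congr r q (fun k hk => by simp [hk])
      obtain ⟨tl, htl⟩ := List.head?_eq_some_iff.mp (hhead n i)
      rw [bstrP_succ, if_neg (lt_irrefl n), htl, hcongr]
      exact ⟨tl, by simp⟩
    exact ⟨bstrP r q n (fun _ => false), LTwit.mem_of_prefix ⟨hlen, hhead, hset⟩
      (List.prefix_refl _), length_bstrP r q hlen n _, key false, key true⟩

lemma strictMono_nat_eq {f g : ℕ → ℕ} (hf : StrictMono f) (hg : StrictMono g)
    (h : ∀ m, (∃ n, f n = m) ↔ (∃ n, g n = m)) : f = g := by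
  funext n
  induction n using Nat.strong_induction_on with
  | _ n ih =>
    obtain ⟨a, ha⟩ := (h (f n)).mp ⟨n, rfl⟩
    obtain ⟨b, hb⟩ := (h (g n)).mpr ⟨n, rfl⟩
    have h1 : n ≤ a := by
      by_contra hna
      push_neg at hna
      have := ih a hna
      have := hf hna
      omega
    have h2 : n ≤ b := by
      by_contra hnb
      push_neg at hnb
      have := ih b hnb
      have := hg hnb
      omega
    have h3 : g n ≤ g a := hg.monotone h1
    have h4 : f n ≤ f b := hf.monotone h2
    omega

lemma splN_unique {T : Tr} {r r' : Str} {q q' : ℕ → Bool → Str}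
    (h : LTwit T r q) (h' : LTwit T r' q') : splN r q = splN r' q' := by
  refine strictMono_nat_eq (splN_strictMono r q h.1) (splN_strictMono r' q' h'.1) fun m => ?_
  rw [← h.splits_iff m, ← h'.splits_iff m]

lemma stem_unique {S T : Tr} {rS rT : Str} {qS qT : ℕ → Bool → Str}
    (hS : LTwit S rS qS) (hT : LTwit T rT qT) (hsub : S ⊆ T)
    (h0 : rS.length = rT.length) : rS = rT := by
  have hmem : rS ∈ T := hsub (hS.mem_of_prefix (n := 0) (f := fun _ => false)
    (by rw [bstrP_zero]))
  obtain ⟨n, f, hp⟩ := (hT.mem_iff rS).mp hmem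
  have hr : rT <+: bstrP rT qT (n+1) f := by
    have := bstrP_mono rT qT (Nat.zero_le (n+1)) f
    rwa [bstrP_zero] at this
  exact (List.prefix_of_prefix_length_le hp hr (le_of_eq h0)).eq_of_length h0

lemma seg_unique {S T : Tr} {rS rT : Str} {qS qT : ℕ → Bool → Str}
    (hS : LTwit S rS qS) (hT : LTwit T rT qT) (hsub : S ⊆ T) (k : ℕ)
    (hk : splN rS qS k = splN rT qT k) (hk1 : splN rS qS (k+1) = splN rT qT (k+1))
    (i : Bool) : qS k i = qT k i := by
  set f : ℕ → Bool := fun _ => i with hf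
  have hmem : bstrP rS qS (k+1) f ∈ T := hsub (hS.mem_of_prefix (List.prefix_refl _))
  obtain ⟨n, g, hp⟩ := (hT.mem_iff _).mp hmem
  set N := max (n+1) (k+1) with hN
  have hpN : bstrP rS qS (k+1) f <+: bstrP rT qT N g :=
    hp.trans (bstrP_mono rT qT (le_max_left _ _) g)
  have hlen1 : (bstrP rS qS (k+1) f).length = (bstrP rT qT (k+1) g).length := by
    rw [length_bstrP rS qS hS.1, length_bstrP rT qT hT.1, hk1]
  have heq : bstrP rS qS (k+1) f = bstrP rT qT (k+1) g :=
    (List.prefix_of_prefix_length_le hpN (bstrP_mono rT qT (le_max_right _ _) g)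
      (le_of_eq hlen1)).eq_of_length hlen1
  rw [bstrP_succ, bstrP_succ] at heq
  have hlen0 : (bstrP rS qS k f).length = (bstrP rT qT k g).length := by
    rw [length_bstrP rS qS hS.1, length_bstrP rT qT hT.1, hk]
  obtain ⟨-, hseg⟩ := List.append_inj heq hlen0
  have hhead : some (f k) = some (g k) := by
    rw [← hS.2.1 k (f k), ← hT.2.1 k (g k), hseg]
  have : f k = g k := by simpa using hhead
  rw [hseg, ← this]


/-- Lemma `fus`(1), fusion: if `T_{n+1} ⊆_{n+1} T_n` for all `n`, all
E0-large, then `T = ⋂_n T_n` is an E0-large tree with `spl_n(T) = spl_n(T_n)` for all `n`. -/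
theorem stmt10 (T : ℕ → Tr) (hLT : ∀ n : ℕ, IsLT (T n))
    (hsub : ∀ n : ℕ, subN (n+1) (T (n+1)) (T n)) :
    IsLT (⋂ n, T n) ∧ ∀ n : ℕ, spl (⋂ n, T n) n = spl (T n) n := by
  classical
  have hW : ∀ m, LTwit (T m) (witness (T m)).1 (witness (T m)).2 := by
    intro m
    obtain ⟨r, q, h⟩ := hLT m
    exact Classical.epsilon_spec
      (p := fun rq : Str × (ℕ → Bool → Str) => LTwit (T m) rq.1 rq.2) ⟨(r, q), h⟩
  -- chain of inclusions
  have hchain : ∀ a b, b ≤ a → T a ⊆ T b := by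
    intro a
    induction a with
    | zero => intro b hb; rw [Nat.le_zero.mp hb]
    | succ a ih =>
        intro b hb
        rcases Nat.lt_or_ge b (a+1) with h' | h'
        · exact ((hsub a).1).trans (ih b (Nat.lt_succ_iff.mp h'))
        · have : b = a + 1 := le_antisymm hb h'
          rw [this]
  -- splitting levels stabilize
  have hsplTm : ∀ j m, j ≤ m → spl (T m) j = spl (T j) j := by
    intro j m hjm
    induction m with
    | zero => rw [Nat.le_zero.mp hjm]
    | succ m ih =>
        rcases Nat.lt_or_ge j (m+1) with h' | h'
        · rw [(hsub m).2 j h', ih (Nat.lt_succ_iff.mp h')]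
        · have : j = m + 1 := le_antisymm hjm h'
          rw [this]
  set r : Str := (witness (T 0)).1 with hr
  set Q : ℕ → Bool → Str := fun k => (witness (T (k+1))).2 k with hQ
  have hQlen : ∀ n : ℕ, (Q n true).length = (Q n false).length ∧ 1 ≤ (Q n false).length :=
    fun n => (hW (n+1)).1 n
  have hQhead : ∀ (n : ℕ) (i : Bool), (Q n i).head? = some i := fun n i => (hW (n+1)).2.1 n i
  -- all stems coincide
  have hstem : ∀ m, (witness (T m)).1 = r := by
    intro m
    induction m with
    | zero => rfl
    | succ m ih =>
        rw [← ih]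
        refine stem_unique (hW (m+1)) (hW m) (hsub m).1 ?_
        have := (hsub m).2 0 (Nat.succ_pos m)
        simpa [spl, splN] using this
  -- segments stabilize
  have hseg : ∀ k m, k + 1 ≤ m → ∀ i : Bool, (witness (T m)).2 k i = Q k i := by
    intro k m hm
    induction m, hm using Nat.le_induction with
    | base => intro i; rfl
    | succ m hm ih =>
        intro i
        have hk : splN (witness (T (m+1))).1 (witness (T (m+1))).2 k
            = splN (witness (T m)).1 (witness (T m)).2 k := (hsub m).2 k (by omega)
        have hk1 : splN (witness (T (m+1))).1 (witness (T (m+1))).2 (k+1)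
            = splN (witness (T m)).1 (witness (T m)).2 (k+1) := (hsub m).2 (k+1) (by omega)
        rw [seg_unique (hW (m+1)) (hW m) (hsub m).1 k hk hk1 i, ih i]
  -- splitting levels of the constructed witness
  have hsplQ : ∀ n, splN r Q n = spl (T n) n := by
    intro n
    induction n with
    | zero => rfl
    | succ n ih =>
        have e1 : splN r Q (n+1) = splN r Q n + (Q n false).length := rfl
        have e2 : spl (T (n+1)) (n+1) = spl (T (n+1)) n + (Q n false).length := rfl
        rw [e1, e2, ih, (hsub n).2 n (Nat.lt_succ_self n)]
  have hbstr : ∀ (n m : ℕ) (f : ℕ → Bool), n ≤ m →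
      bstrP r Q n f = bstrP (witness (T m)).1 (witness (T m)).2 n f := by
    intro n m f hnm
    unfold bstrP
    rw [hstem m]
    congr 2
    refine (List.map_congr_left fun k hk => ?_)
    have hkn := List.mem_range.mp hk
    rw [hseg k m (by omega)]
  have hLTwitQ : LTwit (⋂ n, T n) r Q := by
    refine ⟨hQlen, hQhead, ?_⟩
    ext t
    simp only [Set.mem_iInter, Set.mem_setOf_eq]
    show (∀ m, t ∈ T m) ↔ ∃ n f, t <+: bstrP r Q (n+1) f
    constructor
    · intro h
      obtain ⟨N, f, hp⟩ := ((hW (t.length + 1)).mem_iff t).mp (h (t.length + 1))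
      set n := t.length with hn
      have hp' : t <+: bstrP (witness (T (n+1))).1 (witness (T (n+1))).2 (max (N+1) n) f :=
        hp.trans (bstrP_mono _ _ (le_max_left _ _) f)
      have ht_le : t.length ≤ splN (witness (T (n+1))).1 (witness (T (n+1))).2 n := by
        have e : splN (witness (T (n+1))).1 (witness (T (n+1))).2 n = splN r Q n := by
          show spl (T (n+1)) n = splN r Q n
          rw [hsplQ n, hsplTm n (n+1) (Nat.le_succ n)]
        rw [e, ← hn]
        exact (splN_strictMono r Q hQlen).le_apply
      have hpn : t <+: bstrP (witness (T (n+1))).1 (witness (T (n+1))).2 n f :=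
        List.prefix_of_prefix_length_le hp' (bstrP_mono _ _ (le_max_right _ _) f)
          (by rwa [length_bstrP _ _ (hW (n+1)).1])
      rw [← hbstr n (n+1) f (Nat.le_succ n)] at hpn
      exact ⟨n, f, hpn.trans (bstrP_mono r Q (Nat.le_succ n) f)⟩
    · rintro ⟨n, f, hp⟩ m
      set M := max m (n+1) with hM
      have e : bstrP r Q (n+1) f = bstrP (witness (T M)).1 (witness (T M)).2 (n+1) f :=
        hbstr (n+1) M f (le_max_right _ _)
      rw [e] at hp
      exact hchain M m (le_max_left _ _) ((hW M).mem_of_prefix hp)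
  refine ⟨⟨r, Q, hLTwitQ⟩, fun n => ?_⟩
  have hWI : LTwit (⋂ n, T n) (witness (⋂ n, T n)).1 (witness (⋂ n, T n)).2 :=
    Classical.epsilon_spec
      (p := fun rq : Str × (ℕ → Bool → Str) => LTwit (⋂ n, T n) rq.1 rq.2) ⟨(r, Q), hLTwitQ⟩
  have huniq := splN_unique hWI hLTwitQ
  show splN (witness (⋂ n, T n)).1 (witness (⋂ n, T n)).2 n = spl (T n) n
  rw [huniq, hsplQ n]

end E0L
end

section
/- (Fusion, part 2.) Let ⟨T_n⟩_{n<ω} be a sequence of E0-large trees such that T_{n+1} ⊆_{n+1} T_n for every n < ω, and let T = ⋂_{n<ω} T_n (an E0-large tree). Then for every n < ω and every s ∈ 2^{n+1}: T→s = T ∩ (T_n→s) = ⋂_{m ≥ n} (T_m→s). -/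
/-!
Fix witnesses `(r_m, q_m)` for the trees `T_m`. A node of `T_{m'}` at splitting level
`k ≤ m ≤ m'` lies in `T_m` at height `spl_k(T_m)`, so it is a node of `T_m` at level `k`, and
reading the digits at the common splitting levels shows that it is reached by the same
directions. Hence the stems and blocks stabilise, `r_m = r_0` and `q_m(k) = q_{k+1}(k)` for
`k < m`, and `⋂ T_m` is the E0-large tree generated by these limits. For `s ⌢ i` of length
`n + 1`, the tree `⋂ T_m` and every `T_m` with `m ≥ n` split along `s ⌢ i` at the same node
`node(s) ⌢ i` of level `n`, so all these splittings are restrictions to that one node.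
-/

namespace E0L

section Lists

variable {α β : Type*}

lemma getElem?_eq_of_prefix {t u : List α} (h : t <+: u) {k : ℕ} (hk : k < t.length) :
    u[k]? = t[k]? := by
  obtain ⟨v, rfl⟩ := h
  exact List.getElem?_append_left hk

lemma getElem?_eq_of_comparable {t u : List α} (h : t <+: u ∨ u <+: t) {k : ℕ}
    (ht : k < t.length) (hu : k < u.length) : t[k]? = u[k]? := by
  rcases h with h | h
  exacts [(getElem?_eq_of_prefix h ht).symm, getElem?_eq_of_prefix h hu]

lemma mapIdx_eq_map_range (f : ℕ → α → β) (s : List α) (d : α) :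
    s.mapIdx f = (List.range s.length).map fun k => f k (s.getD k d) := by
  refine List.ext_getElem (by simp) fun k h₁ _ => ?_
  rw [List.length_mapIdx] at h₁
  simp [List.getElem?_eq_getElem h₁]

end Lists

/-- `node r q s = r⌢q^{s(0)}_0⌢…⌢q^{s(k-1)}_{k-1}` with `k = |s|`. -/
def node (r : Str) (q : ℕ → Bool → Str) (s : Str) : Str := r ++ (s.mapIdx q).flatten

section Node

variable (r : Str) (q : ℕ → Bool → Str)

@[simp] lemma node_nil : node r q [] = r := by simp [node]

lemma node_append_singleton (s : Str) (i : Bool) :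
    node r q (s ++ [i]) = node r q s ++ q s.length i := by
  simp [node]

lemma node_cons (i : Bool) (s : Str) :
    node r q (i :: s) = node (r ++ q 0 i) (fun k => q (k + 1)) s := by
  simp [node, List.mapIdx_cons]

lemma node_mono {s s' : Str} (h : s <+: s') : node r q s <+: node r q s' := by
  obtain ⟨u, rfl⟩ := h
  simp [node, List.mapIdx_append]

lemma prefix_node (s : Str) : r <+: node r q s := List.prefix_append _ _

lemma length_node (hlen : ∀ k, (q k true).length = (q k false).length) (s : Str) :
    (node r q s).length = splN r q s.length := by
  induction s using List.reverseRecOn with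
  | nil => simp [splN]
  | append_singleton s i ih =>
    cases i <;> simp [node_append_singleton, ih, splN, hlen]

lemma le_splN (hpos : ∀ k, 1 ≤ (q k false).length) (k : ℕ) : k ≤ splN r q k := by
  induction k with
  | zero => exact Nat.zero_le _
  | succ k ih => have := hpos k; simp only [splN]; omega

lemma getElem?_node (hlen : ∀ k, (q k true).length = (q k false).length)
    (hhead : ∀ k i, (q k i).head? = some i) {s : Str} {k : ℕ} (hk : k < s.length) :
    (node r q s)[splN r q k]? = s[k]? := by
  have hsplit : node r q (s.take (k + 1)) = node r q (s.take k) ++ q k s[k] := by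
    rw [← List.take_concat_get hk, List.concat_eq_append, node_append_singleton,
      List.length_take_of_le hk.le]
  have hlen_take : (node r q (s.take k)).length = splN r q k := by
    rw [length_node r q hlen, List.length_take_of_le hk.le]
  have hblock : 0 < (q k s[k]).length :=
    List.length_pos_of_ne_nil fun h => by simpa [h] using hhead k s[k]
  rw [getElem?_eq_of_prefix (node_mono r q (List.take_prefix (k + 1) s))
    (by rw [hsplit, List.length_append]; omega), hsplit,
    List.getElem?_append_right hlen_take.le, hlen_take, Nat.sub_self,
    ← List.head?_eq_getElem?, hhead, List.getElem?_eq_getElem hk]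

end Node

lemma setOf_prefix_flatten_eq (r : Str) (q : ℕ → Bool → Str) :
    {t : Str | ∃ n : ℕ, ∃ f : ℕ → Bool,
        t <+: r ++ ((List.range (n+1)).map (fun k => q k (f k))).flatten} =
      {t | ∃ s, t <+: node r q s} := by
  ext t
  constructor
  · rintro ⟨n, f, ht⟩
    have hnode : node r q (List.ofFn fun k : Fin (n + 1) => f k) =
        r ++ ((List.range (n+1)).map (fun k => q k (f k))).flatten := by
      simp only [node, mapIdx_eq_map_range _ _ false, List.length_ofFn]
      congr 2
      refine List.map_congr_left fun k hk => ?_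
      rw [List.getD_eq_getElem _ _ (by simpa using hk), List.getElem_ofFn]
    exact ⟨_, hnode ▸ ht⟩
  · rintro ⟨s, ht⟩
    refine ⟨s.length, fun k => s.getD k false, ht.trans ?_⟩
    rw [node, mapIdx_eq_map_range _ _ false, List.range_succ, List.map_append, List.flatten_append,
      ← List.append_assoc]
    exact List.prefix_append _ _

lemma restr_restr (T : Tr) {u v : Str} (h : u <+: v) : restr (restr T u) v = restr T v := by
  ext t
  simp only [restr, Set.mem_ofPred_eq]
  refine ⟨fun ⟨⟨ht, _⟩, hc⟩ => ⟨ht, hc⟩, fun ⟨ht, hc⟩ => ⟨⟨ht, ?_⟩, hc⟩⟩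
  rcases hc with hc | hc
  exacts [Or.inl (h.trans hc), List.prefix_or_prefix_of_prefix h hc]

lemma IsLT.ltwit_witness {T : Tr} (h : IsLT T) : LTwit T (witness T).1 (witness T).2 :=
  let ⟨r, q, hrq⟩ := h
  Classical.epsilon_spec (p := fun rq : Str × (ℕ → Bool → Str) => LTwit T rq.1 rq.2)
    ⟨(r, q), hrq⟩

namespace LTwit

variable {T : Tr} {r : Str} {q : ℕ → Bool → Str}

lemma of_mem_iff
    (hblock : ∀ n, (q n true).length = (q n false).length ∧ 1 ≤ (q n false).length)
    (hhead : ∀ n i, (q n i).head? = some i) (hmem : ∀ t, t ∈ T ↔ ∃ s, t <+: node r q s) :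
    LTwit T r q :=
  ⟨hblock, hhead, by rw [setOf_prefix_flatten_eq]; exact Set.ext hmem⟩

lemma mem_iff_s11 (h : LTwit T r q) {t : Str} : t ∈ T ↔ ∃ s, t <+: node r q s := by
  rw [h.2.2, setOf_prefix_flatten_eq]
  rfl

lemma node_mem (h : LTwit T r q) (s : Str) : node r q s ∈ T :=
  h.mem_iff_s11.2 ⟨s, List.prefix_refl _⟩

lemma mem_of_prefix_s11 (h : LTwit T r q) {t t' : Str} (ht' : t' ∈ T) (ht : t <+: t') : t ∈ T :=
  let ⟨s, hs⟩ := h.mem_iff_s11.1 ht'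
  h.mem_iff_s11.2 ⟨s, ht.trans hs⟩

lemma length_node (h : LTwit T r q) (s : Str) : (node r q s).length = splN r q s.length :=
  E0L.length_node r q (fun k => (h.1 k).1) s

lemma le_splN (h : LTwit T r q) (k : ℕ) : k ≤ splN r q k :=
  E0L.le_splN r q (fun k => (h.1 k).2) k

lemma getElem?_node (h : LTwit T r q) {s : Str} {k : ℕ} (hk : k < s.length) :
    (node r q s)[splN r q k]? = s[k]? :=
  E0L.getElem?_node r q (fun k => (h.1 k).1) h.2.1 hk

lemma restr_self (h : LTwit T r q) : restr T r = T := by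
  ext t
  refine ⟨fun ht => ht.1, fun ht => ⟨ht, ?_⟩⟩
  obtain ⟨s, hs⟩ := h.mem_iff_s11.1 ht
  exact List.prefix_or_prefix_of_prefix (prefix_node r q s) hs

lemma exists_node_of_length_le (h : LTwit T r q) {t : Str} (ht : t ∈ T) {k : ℕ}
    (hk : t.length ≤ splN r q k) : ∃ s, s.length = k ∧ t <+: node r q s := by
  obtain ⟨s₀, hs₀⟩ := h.mem_iff_s11.1 ht
  set s₁ := s₀ ++ List.replicate k false
  have hk₁ : (s₁.take k).length = k := by simp [s₁]
  refine ⟨s₁.take k, hk₁, List.prefix_of_prefix_length_le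
    (hs₀.trans (node_mono r q (List.prefix_append _ _)))
    (node_mono r q (List.take_prefix k s₁)) ?_⟩
  rwa [h.length_node, hk₁]

lemma eq_node_of_length (h : LTwit T r q) {t : Str} (ht : t ∈ T) {k : ℕ}
    (hk : t.length = splN r q k) : ∃ s, s.length = k ∧ t = node r q s := by
  obtain ⟨s, hs, hts⟩ := h.exists_node_of_length_le ht hk.le
  exact ⟨s, hs, hts.eq_of_length (by rw [h.length_node, hs, hk])⟩

lemma stem_eq_s11 (h : LTwit T r q) : stem T = r := by
  have hlongest : ∀ t ∈ T, restr T t = T → t.length ≤ r.length := by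
    intro t _ hrestr
    by_contra! hlong
    -- `t` would be comparable with both nodes of level 1, which differ at position `|r|`
    have hdigit : ∀ b : Bool, t[r.length]? = some b := fun b => by
      have hcomp : node r q [b] ∈ restr T t := by rw [hrestr]; exact h.node_mem [b]
      have hlen : r.length < (node r q [b]).length := by
        rw [h.length_node]
        have := (h.1 0).2
        simp only [splN, List.length_singleton]
        omega
      rw [getElem?_eq_of_comparable hcomp.2 hlong hlen]
      exact h.getElem?_node (s := [b]) (k := 0) (by simp)
    simpa using (hdigit true).symm.trans (hdigit false)
  have hr : r ∈ T ∧ restr T r = T ∧ ∀ t ∈ T, restr T t = T → t.length ≤ r.length :=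
    ⟨by simpa using h.node_mem [], h.restr_self, hlongest⟩
  obtain ⟨hmem, hrestr, hmax⟩ := Classical.epsilon_spec
    (p := fun s => s ∈ T ∧ restr T s = T ∧ ∀ t ∈ T, restr T t = T → t.length ≤ s.length)
    ⟨r, hr⟩
  have hcomp : stem T <+: r ∨ r <+: stem T := (hrestr.symm ▸ hr.1 : r ∈ restr T (stem T)).2
  have hlen : (stem T).length = r.length :=
    le_antisymm (hlongest _ hmem hrestr) (hmax r hr.1 hr.2.1)
  rcases hcomp with hc | hc
  exacts [hc.eq_of_length hlen, (hc.eq_of_length hlen.symm).symm]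

lemma split1_eq (h : LTwit T r q) (i : Bool) : split1 T i = restr T (r ++ [i]) := by
  rw [split1, h.stem_eq_s11]

lemma prefix_node_cons (h : LTwit T r q) (i : Bool) (s : Str) :
    r ++ [i] <+: node r q (i :: s) := by
  obtain ⟨u, hu⟩ := List.head?_eq_some_iff.1 (h.2.1 0 i)
  rw [node_cons, hu]
  exact (List.prefix_append_right_inj r).2 ⟨u, rfl⟩ |>.trans (prefix_node _ _ s)

lemma ltwit_split1 (h : LTwit T r q) (i : Bool) :
    LTwit (split1 T i) (r ++ q 0 i) (fun k => q (k + 1)) := by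
  refine of_mem_iff (fun k => h.1 (k + 1)) (fun k => h.2.1 (k + 1)) fun t => ?_
  simp only [← node_cons, h.split1_eq, restr, Set.mem_ofPred_eq]
  constructor
  · rintro ⟨ht, hc | hc⟩
    · obtain ⟨s₀, hs₀⟩ := h.mem_iff_s11.1 ht
      have hlt : r.length < t.length := by simpa using hc.length_le
      cases s₀ with
      | nil => exact absurd hs₀.length_le (by simpa using hlt)
      | cons j s =>
        have hj : some j = some i :=
          calc some j = (node r q (j :: s))[r.length]? :=
                (h.getElem?_node (s := j :: s) (k := 0) (by simp)).symm
            _ = t[r.length]? := getElem?_eq_of_prefix hs₀ hlt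
            _ = (r ++ [i])[r.length]? := getElem?_eq_of_prefix hc (by simp)
            _ = some i := by simp
        obtain rfl := Option.some_inj.1 hj
        exact ⟨s, hs₀⟩
    · exact ⟨[], hc.trans (h.prefix_node_cons i [])⟩
  · rintro ⟨s, hs⟩
    exact ⟨h.mem_of_prefix_s11 (h.node_mem _) hs,
      List.prefix_or_prefix_of_prefix (h.prefix_node_cons i s) hs⟩

lemma ltwit_splitS (h : LTwit T r q) (s : Str) :
    LTwit (splitS T s) (node r q s) (fun k => q (k + s.length)) := by
  induction s generalizing T r q with
  | nil => simpa [splitS] using h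
  | cons i s ih =>
    have := ih (h.ltwit_split1 i)
    simp only [← node_cons, Nat.add_assoc] at this
    exact this

lemma splitS_eq (h : LTwit T r q) (s : Str) : splitS T s = restr T (node r q s) := by
  induction s generalizing T r q with
  | nil => simpa [splitS] using h.restr_self.symm
  | cons i s ih =>
    rw [show splitS T (i :: s) = splitS (split1 T i) s from rfl, ih (h.ltwit_split1 i),
      ← node_cons, h.split1_eq, restr_restr T (h.prefix_node_cons i s)]

lemma splitS_append_singleton (h : LTwit T r q) (s : Str) (i : Bool) :
    splitS T (s ++ [i]) = restr T (node r q s ++ [i]) := by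
  rw [show splitS T (s ++ [i]) = split1 (splitS T s) i from List.foldl_append ..,
    (h.ltwit_splitS s).split1_eq, h.splitS_eq, restr_restr T (List.prefix_append _ _)]

end LTwit

lemma LTwit.node_eq_of_subset {S T : Tr} {r' r : Str} {q' q : ℕ → Bool → Str}
    (hS : LTwit S r' q') (hT : LTwit T r q) (hST : S ⊆ T) {n : ℕ}
    (hspl : ∀ k ≤ n, splN r' q' k = splN r q k) {s : Str} (hs : s.length ≤ n) :
    node r' q' s = node r q s := by
  obtain ⟨s', hs', heq⟩ := hT.eq_node_of_length (hST (hS.node_mem s))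
    (by rw [hS.length_node, hspl _ hs])
  -- both witnesses read the same directions off the common splitting levels
  suffices s' = s by rw [heq, this]
  refine List.ext_getElem? fun k => ?_
  rcases lt_or_ge k s.length with hk | hk
  · rw [← hS.getElem?_node hk, hspl k (by omega), heq, hT.getElem?_node (hs' ▸ hk)]
  · rw [List.getElem?_eq_none (hs' ▸ hk), List.getElem?_eq_none hk]

lemma LTwit.block_eq_of_subset {S T : Tr} {r' r : Str} {q' q : ℕ → Bool → Str}
    (hS : LTwit S r' q') (hT : LTwit T r q) (hST : S ⊆ T) {n : ℕ}
    (hspl : ∀ k ≤ n, splN r' q' k = splN r q k) {k : ℕ} (hk : k < n) (i : Bool) :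
    q' k i = q k i := by
  have h := hS.node_eq_of_subset hT hST hspl (s := List.replicate k false ++ [i]) (by simpa)
  rw [node_append_singleton, node_append_singleton,
    hS.node_eq_of_subset hT hST hspl (by simpa using hk.le)] at h
  simpa using h

section Fusion

variable {T : ℕ → Tr} {R : ℕ → Str} {q : ℕ → ℕ → Bool → Str}

lemma splN_eq_of_le (hspl : ∀ m, ∀ k ≤ m, splN (R (m + 1)) (q (m + 1)) k = splN (R m) (q m) k)
    {m m' : ℕ} (hm : m ≤ m') {k : ℕ} (hk : k ≤ m) :
    splN (R m') (q m') k = splN (R m) (q m) k := by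
  induction m', hm using Nat.le_induction with
  | base => rfl
  | succ m' hm ih => rw [hspl m' k (hk.trans hm), ih]

/-- The stems stabilise from the start and the `k`-th blocks from stage `k + 1` on. -/
lemma node_eq_node_lim (hw : ∀ m, LTwit (T m) (R m) (q m)) (hanti : Antitone T)
    (hspl : ∀ m, ∀ k ≤ m, splN (R (m + 1)) (q (m + 1)) k = splN (R m) (q m) k)
    {m : ℕ} {s : Str} (hs : s.length ≤ m) :
    node (R m) (q m) s = node (R 0) (fun k => q (k + 1) k) s := by
  induction s using List.reverseRecOn with
  | nil =>
    simpa using (hw m).node_eq_of_subset (hw 0) (hanti (Nat.zero_le m))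
      (fun k hk => splN_eq_of_le hspl (Nat.zero_le m) hk) (s := []) le_rfl
  | append_singleton s i ih =>
    rw [List.length_append, List.length_singleton] at hs
    rw [node_append_singleton, node_append_singleton, ih (by omega),
      (hw m).block_eq_of_subset (hw (s.length + 1)) (hanti hs)
        (fun k hk => splN_eq_of_le hspl hs hk) (Nat.lt_succ_self _)]

lemma ltwit_iInter (hw : ∀ m, LTwit (T m) (R m) (q m)) (hanti : Antitone T)
    (hspl : ∀ m, ∀ k ≤ m, splN (R (m + 1)) (q (m + 1)) k = splN (R m) (q m) k) :
    LTwit (⋂ m, T m) (R 0) (fun k => q (k + 1) k) := by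
  refine LTwit.of_mem_iff (fun k => (hw (k + 1)).1 k) (fun k => (hw (k + 1)).2.1 k) fun t => ?_
  constructor
  · intro ht
    obtain ⟨s, hs, hts⟩ := (hw t.length).exists_node_of_length_le
      (Set.mem_iInter.1 ht t.length) ((hw t.length).le_splN t.length)
    exact ⟨s, node_eq_node_lim hw hanti hspl hs.le ▸ hts⟩
  · rintro ⟨s, hts⟩
    refine Set.mem_iInter.2 fun j => hanti (le_max_left j s.length) ?_
    rw [← node_eq_node_lim hw hanti hspl (le_max_right j s.length)] at hts
    exact (hw _).mem_of_prefix_s11 ((hw _).node_mem s) hts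

end Fusion

lemma restr_eq_inter_restr {S T : Tr} (h : S ⊆ T) (u : Str) : restr S u = S ∩ restr T u := by
  ext t
  exact ⟨fun ht => ⟨ht.1, h ht.1, ht.2⟩, fun ht => ⟨ht.1, ht.2.2⟩⟩

lemma restr_iInter_eq_biInter {T : ℕ → Tr} (hanti : Antitone T) (n : ℕ) (u : Str) :
    restr (⋂ k, T k) u = ⋂ m, ⋂ (_ : n ≤ m), restr (T m) u := by
  ext t
  simp only [restr, Set.mem_iInter, Set.mem_ofPred_eq]
  refine ⟨fun ht m _ => ⟨ht.1 m, ht.2⟩, fun ht => ⟨fun k => ?_, (ht n le_rfl).2⟩⟩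
  exact hanti (le_max_left k n) (ht (max k n) (le_max_right k n)).1

/-- Lemma `fus`(2), fusion: if `T_{n+1} ⊆_{n+1} T_n` for all `n`, all
E0-large, and `T = ⋂_n T_n`, then for every `n` and `s ∈ 2^{n+1}`:
`T→s = T ∩ (T_n→s) = ⋂_{m ≥ n} (T_m→s)`. -/
theorem stmt11 (T : ℕ → Tr) (hLT : ∀ n : ℕ, IsLT (T n))
    (hsub : ∀ n : ℕ, subN (n+1) (T (n+1)) (T n)) :
    ∀ n : ℕ, ∀ s : Str, s.length = n + 1 →
      splitS (⋂ k, T k) s = (⋂ k, T k) ∩ splitS (T n) s ∧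
      splitS (⋂ k, T k) s = ⋂ m, ⋂ (_ : n ≤ m), splitS (T m) s := by
  have hanti : Antitone T := antitone_nat_of_succ_le fun n => (hsub n).1
  have hw : ∀ m, LTwit (T m) (witness (T m)).1 (witness (T m)).2 :=
    fun m => (hLT m).ltwit_witness
  have hspl : ∀ m, ∀ k ≤ m, spl (T (m + 1)) k = spl (T m) k :=
    fun m k hk => (hsub m).2 k (Nat.lt_succ_of_le hk)
  intro n s hs
  cases s using List.reverseRecOn with
  | nil => simp at hs
  | append_singleton s i =>
    have hn : s.length = n := by simpa using hs
    -- every tree involved splits along `s ⌢ i` at the same node of level `n`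
    set u := node (witness (T 0)).1 (fun k => (witness (T (k + 1))).2 k) s ++ [i]
    have hsplit : ∀ m, n ≤ m → splitS (T m) (s ++ [i]) = restr (T m) u := fun m hm => by
      rw [(hw m).splitS_append_singleton, node_eq_node_lim hw hanti hspl (hn ▸ hm)]
    rw [(ltwit_iInter hw hanti hspl).splitS_append_singleton]
    exact ⟨by rw [hsplit n le_rfl, restr_eq_inter_restr (Set.iInter_subset T n)],
      (restr_iInter_eq_biInter hanti n u).trans
        (Set.iInter₂_congr fun m hm => (hsplit m hm).symm)⟩

end E0L
end
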